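/- For independent unit-mean exponential fading powers and a fixed transmission rate λ ≥ 0, the probability that the instantaneous secrecy rate exceeds λ is P(z1 > 2^λ·z2 + (2^λ − 1)/snr) = e^{−(2^λ − 1)/snr} / (2^λ + 1), for every snr > 0. -/

import Mathlib

open MeasureTheory ProbabilityTheory Filter Set
open scoped ENNReal

/-! Given the eavesdropper's power `z₂ = y ≥ 0`, the event is `z₁ > c y + b` with `b ≥ 0`, of
probability `e^{-(c y + b)}`. Averaging over `y` is the Laplace transform of `Exp(1)` at `c`, which
is `1 / (1 + c)` because the density `e^{-y}` tilted by `e^{-c y}` is `1 / (1 + c)` times the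
density of `Exp(1 + c)`. -/

namespace ProbabilityTheory

lemma expMeasure_Iic_zero {r : ℝ} (hr : 0 < r) : expMeasure r (Iic 0) = 0 := by
  have := isProbabilityMeasure_expMeasure hr
  rw [← ofReal_cdf, cdf_expMeasure_eq hr, if_pos le_rfl]
  simp

lemma ae_nonneg_expMeasure {r : ℝ} (hr : 0 < r) : ∀ᵐ x ∂expMeasure r, 0 ≤ x := by
  rw [ae_iff]
  exact measure_mono_null (fun x hx ↦ (not_le.mp hx).le) (expMeasure_Iic_zero hr)

lemma expMeasure_Ioi {r a : ℝ} (hr : 0 < r) (ha : 0 ≤ a) :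
    expMeasure r (Ioi a) = ENNReal.ofReal (Real.exp (-(r * a))) := by
  have := isProbabilityMeasure_expMeasure hr
  have hle : Real.exp (-(r * a)) ≤ 1 := Real.exp_le_one_iff.mpr (by nlinarith)
  rw [← compl_Iic, prob_compl_eq_one_sub measurableSet_Iic, ← ofReal_cdf, cdf_expMeasure_eq hr,
    if_pos ha, ← ENNReal.ofReal_one, ← ENNReal.ofReal_sub _ (sub_nonneg.mpr hle), sub_sub_cancel]

lemma exponentialPDF_mul_exp_neg_mul {r c : ℝ} (hr : 0 ≤ r) (hrc : 0 < r + c) (x : ℝ) :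
    exponentialPDF r x * ENNReal.ofReal (Real.exp (-(c * x)))
      = ENNReal.ofReal (r / (r + c)) * exponentialPDF (r + c) x := by
  rcases lt_or_ge x 0 with hx | hx
  · simp [exponentialPDF_of_neg hx]
  rw [exponentialPDF_of_nonneg hx, exponentialPDF_of_nonneg hx,
    ← ENNReal.ofReal_mul (by positivity), ← ENNReal.ofReal_mul (by positivity)]
  congr 1
  rw [mul_assoc, ← Real.exp_add, ← mul_assoc, div_mul_cancel₀ _ hrc.ne']
  ring_nf

lemma lintegral_exp_neg_mul_expMeasure {r c : ℝ} (hr : 0 ≤ r) (hrc : 0 < r + c) :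
    ∫⁻ x, ENNReal.ofReal (Real.exp (-(c * x))) ∂expMeasure r = ENNReal.ofReal (r / (r + c)) := by
  have hpdf (t : ℝ) : Measurable (exponentialPDF t) :=
    (measurable_exponentialPDFReal t).ennreal_ofReal
  rw [show expMeasure r = volume.withDensity (exponentialPDF r) from rfl,
    lintegral_withDensity_eq_lintegral_mul _ (hpdf r) (by fun_prop)]
  simp only [Pi.mul_apply, exponentialPDF_mul_exp_neg_mul hr hrc]
  rw [lintegral_const_mul _ (hpdf (r + c)),
    lintegral_exponentialPDF_eq_one hrc, mul_one]

section Independent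

variable {Ω : Type*} [MeasurableSpace Ω] {μ : Measure Ω} [IsFiniteMeasure μ] {X Y : Ω → ℝ}

lemma IndepFun.measure_lt_eq_lintegral (hX : AEMeasurable X μ) (hY : AEMeasurable Y μ)
    (hXY : IndepFun X Y μ) {f : ℝ → ℝ} (hf : Measurable f) :
    μ {ω | f (Y ω) < X ω} = ∫⁻ y, μ.map X (Ioi (f y)) ∂μ.map Y := by
  have hS : MeasurableSet {p : ℝ × ℝ | f p.1 < p.2} :=
    measurableSet_lt (hf.comp measurable_fst) measurable_snd
  rw [show {ω | f (Y ω) < X ω} = (fun ω ↦ (Y ω, X ω)) ⁻¹' {p | f p.1 < p.2} from rfl,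
    ← Measure.map_apply_of_aemeasurable (hY.prodMk hX) hS,
    (indepFun_iff_map_prod_eq_prod_map_map hY hX).mp hXY.symm, Measure.prod_apply hS]
  rfl

lemma IndepFun.measure_mul_add_lt_of_expMeasure (hXY : IndepFun X Y μ) {r s c b : ℝ}
    (hr : 0 < r) (hs : 0 < s) (hc : 0 ≤ c) (hb : 0 ≤ b)
    (hX : μ.map X = expMeasure r) (hY : μ.map Y = expMeasure s) :
    μ {ω | c * Y ω + b < X ω} = ENNReal.ofReal (Real.exp (-(r * b)) * (s / (s + r * c))) := by
  have hXm : AEMeasurable X μ :=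
    .of_map_ne_zero (hX ▸ (isProbabilityMeasure_expMeasure hr).ne_zero)
  have hYm : AEMeasurable Y μ :=
    .of_map_ne_zero (hY ▸ (isProbabilityMeasure_expMeasure hs).ne_zero)
  rw [hXY.measure_lt_eq_lintegral hXm hYm (f := fun y ↦ c * y + b) (by fun_prop), hX, hY]
  calc ∫⁻ y, expMeasure r (Ioi (c * y + b)) ∂expMeasure s
      = ∫⁻ y, ENNReal.ofReal (Real.exp (-(r * b))) * ENNReal.ofReal (Real.exp (-(r * c * y)))
          ∂expMeasure s := by
        refine lintegral_congr_ae ?_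
        filter_upwards [ae_nonneg_expMeasure hs] with y hy
        rw [expMeasure_Ioi hr (by positivity), ← ENNReal.ofReal_mul (Real.exp_nonneg _),
          ← Real.exp_add]
        ring_nf
    _ = ENNReal.ofReal (Real.exp (-(r * b)) * (s / (s + r * c))) := by
        rw [lintegral_const_mul _ (by fun_prop),
          lintegral_exp_neg_mul_expMeasure hs.le (by positivity),
          ← ENNReal.ofReal_mul (Real.exp_nonneg _)]

end Independent

end ProbabilityTheory

theorem secrecy_outage_on_probability_exponential_general
    {Ω : Type*} [MeasurableSpace Ω] (μ : Measure Ω) [IsProbabilityMeasure μ]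
    (z1 z2 : Ω → ℝ)
    (hindep : IndepFun z1 z2 μ)
    (hz1law : μ.map z1 = expMeasure 1)
    (hz2law : μ.map z2 = expMeasure 1)
    (lam : ℝ) (hlam : 0 ≤ lam) (snr : ℝ) (hsnr : 0 < snr) :
    (μ {ω | (2 : ℝ) ^ lam * z2 ω + ((2 : ℝ) ^ lam - 1) / snr < z1 ω}).toReal
      = Real.exp (-(((2 : ℝ) ^ lam - 1) / snr)) / ((2 : ℝ) ^ lam + 1) := by
  have hpow : 1 ≤ (2 : ℝ) ^ lam := Real.one_le_rpow one_le_two hlam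
  rw [hindep.measure_mul_add_lt_of_expMeasure one_pos one_pos (by positivity)
      (div_nonneg (by linarith) hsnr.le) hz1law hz2law, ENNReal.toReal_ofReal (by positivity),
    one_mul, one_mul, mul_one_div, add_comm]

/-- For independent unit-mean exponential fading powers and a fixed
transmission rate `lam ≥ 0`, the probability that the instantaneous secrecy rate
exceeds `lam` is
`P(z1 > 2^lam·z2 + (2^lam − 1)/snr) = e^{−(2^lam − 1)/snr} / (2^lam + 1)`,
for every `snr > 0`. -/
theorem secrecy_outage_on_probability_exponential
    {Ω : Type*} [MeasurableSpace Ω] (μ : Measure Ω) [IsProbabilityMeasure μ]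
    (z1 z2 : Ω → ℝ) (hz1m : Measurable z1) (hz2m : Measurable z2)
    (hindep : IndepFun z1 z2 μ)
    (hz1law : μ.map z1 = expMeasure 1)
    (hz2law : μ.map z2 = expMeasure 1)
    (lam : ℝ) (hlam : 0 ≤ lam) (snr : ℝ) (hsnr : 0 < snr) :
    (μ {ω | (2 : ℝ) ^ lam * z2 ω + ((2 : ℝ) ^ lam - 1) / snr < z1 ω}).toReal
      = Real.exp (-(((2 : ℝ) ^ lam - 1) / snr)) / ((2 : ℝ) ^ lam + 1) :=
  secrecy_outage_on_probability_exponential_general μ z1 z2 hindep hz1law hz2law lam hlam snr hsnr
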